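/- arXiv:1407.1712 — 4 statements merged into one kernel-verified Lean document; each statement's English description precedes it below -/
import Mathlib

section
/- Let d ≥ 2 and let u : ℤ^d → ℂ^d be a divergence-free Fourier coefficient sequence with u_0 = 0, finite energy E(u) and finite enstrophy V(u). Then for every k ∈ ℤ^d \ {0}, the series defining N_k(u) converges absolutely and |N_k(u)| ≤ √(E(u)) · √(V(u)). -/
noncomputable section

open scoped BigOperators

/-- Euclidean norm of an integer vector `k ∈ ℤ^d ⊂ ℝ^d`. -/
def znorm {d : ℕ} (k : Fin d → ℤ) : ℝ := Real.sqrt (∑ i, ((k i : ℝ))^2)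

/-- The bilinear pairing `(a·k) = Σ_j a_j k_j` of a complex vector with an integer vector. -/
def dotZ {d : ℕ} (a : EuclideanSpace ℂ (Fin d)) (k : Fin d → ℤ) : ℂ := ∑ j, a j * (k j : ℂ)

/-- Orthogonal projection `Π_k` onto the orthogonal complement of the (real) vector `k`. -/
def projP {d : ℕ} (k : Fin d → ℤ) (v : EuclideanSpace ℂ (Fin d)) : EuclideanSpace ℂ (Fin d) :=
  WithLp.toLp 2 (fun j => v j - (dotZ v k / ((∑ i, ((k i : ℝ))^2 : ℝ) : ℂ)) * (k j : ℂ))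

/-- The `k1`-th term of the Navier–Stokes nonlinearity
`N_k(u) = -i Σ_{k1 ≠ 0} (u_{k1}·k) Π_k u_{k-k1}`. -/
def Nterm {d : ℕ} (u : (Fin d → ℤ) → EuclideanSpace ℂ (Fin d)) (k k1 : Fin d → ℤ) :
    EuclideanSpace ℂ (Fin d) :=
  if k1 = 0 then 0 else (-Complex.I * dotZ (u k1) k) • projP k (u (k - k1))

/-- The Navier–Stokes nonlinearity `N_k(u)`. -/
def Nfun {d : ℕ} (u : (Fin d → ℤ) → EuclideanSpace ℂ (Fin d)) (k : Fin d → ℤ) :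
    EuclideanSpace ℂ (Fin d) := ∑' k1, Nterm u k k1

/-- Energy `E(u) = Σ_k |u_k|²`. -/
def energy {d : ℕ} (u : (Fin d → ℤ) → EuclideanSpace ℂ (Fin d)) : ℝ := ∑' k, ‖u k‖^2

/-- Enstrophy `V(u) = Σ_k |k|²|u_k|²`. -/
def enstrophy {d : ℕ} (u : (Fin d → ℤ) → EuclideanSpace ℂ (Fin d)) : ℝ :=
  ∑' k, (znorm k)^2 * ‖u k‖^2

/-- Divergence-free: `(u_k · k) = 0` for all `k`. -/
def divFree {d : ℕ} (u : (Fin d → ℤ) → EuclideanSpace ℂ (Fin d)) : Prop :=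
  ∀ k, dotZ (u k) k = 0

/-- Reality condition: `u_{-k} = conj (u_k)`. -/
def realSeq {d : ℕ} (u : (Fin d → ℤ) → EuclideanSpace ℂ (Fin d)) : Prop :=
  ∀ k j, u (-k) j = starRingEnd ℂ (u k j)

/-- RHS of the Galerkin-projected Navier–Stokes system in the Fourier domain.
(For `u` supported on modes `0 < |k| ≤ n`, the `tsum` below reduces to the finite sum
over `k1 ≠ 0`, `|k1| ≤ n`, `0 < |k-k1| ≤ n`.) -/
def GalerkinRHS {d : ℕ} (ν : ℝ) (fk : EuclideanSpace ℂ (Fin d))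
    (u : (Fin d → ℤ) → EuclideanSpace ℂ (Fin d)) (k : Fin d → ℤ) :
    EuclideanSpace ℂ (Fin d) :=
  (∑' k1, Nterm u k k1) - ((ν * (znorm k)^2 : ℝ) : ℂ) • u k + projP k fk

/-- `u : ℝ → (ℤ^d → ℂ^d)` is a solution of the symmetric Galerkin projection of order `n`
of the Navier–Stokes Fourier system with viscosity `ν` and forcing `f`. -/
def IsGalerkinSol {d : ℕ} (ν n : ℝ) (f : ℝ → (Fin d → ℤ) → EuclideanSpace ℂ (Fin d))
    (u : ℝ → (Fin d → ℤ) → EuclideanSpace ℂ (Fin d)) : Prop :=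
  (∀ t, u t 0 = 0) ∧
  (∀ t k, n < znorm k → u t k = 0) ∧
  (∀ t (k : Fin d → ℤ), k ≠ 0 → znorm k ≤ n →
    HasDerivAt (fun s => u s k) (GalerkinRHS ν (f t k) (u t) k) t)

/-!
Since `u` is divergence-free, `(u_{k₁}·k) = (u_{k₁}·(k - k₁))`, and `Π_k` is an orthogonal
projection, hence a contraction; so the `k₁`-th term of `N_k(u)` is bounded by
`|u_{k₁}| · |k - k₁| |u_{k - k₁}|`. The Cauchy–Schwarz inequality over `k₁`, followed by the
reindexing `k₁ ↦ k - k₁` in the second factor, bounds the sum of these by `√E(u) √V(u)`.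
-/

open scoped InnerProductSpace

lemma Real.summable_mul_and_tsum_mul_le_sqrt_mul_sqrt {ι : Type*} {f g : ι → ℝ}
    (hf : ∀ i, 0 ≤ f i) (hg : ∀ i, 0 ≤ g i)
    (hf₂ : Summable fun i => f i ^ 2) (hg₂ : Summable fun i => g i ^ 2) :
    (Summable fun i => f i * g i) ∧
      ∑' i, f i * g i ≤ √(∑' i, f i ^ 2) * √(∑' i, g i ^ 2) := by
  simpa [Real.sqrt_eq_rpow] using Real.summable_and_inner_le_Lp_mul_Lq_tsum_of_nonneg .two_two
    hf hg (by simpa using hf₂) (by simpa using hg₂)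

section

variable {d : ℕ}

def intVecC (k : Fin d → ℤ) : EuclideanSpace ℂ (Fin d) := WithLp.toLp 2 fun j => (k j : ℂ)

lemma dotZ_eq_inner (a : EuclideanSpace ℂ (Fin d)) (k : Fin d → ℤ) :
    dotZ a k = ⟪intVecC k, a⟫_ℂ := by
  simp [dotZ, intVecC, PiLp.inner_apply, mul_comm]

lemma norm_intVecC (k : Fin d → ℤ) : ‖intVecC k‖ = znorm k := by
  simp [EuclideanSpace.norm_eq, intVecC, znorm, Complex.norm_intCast]

lemma norm_dotZ_le (a : EuclideanSpace ℂ (Fin d)) (k : Fin d → ℤ) :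
    ‖dotZ a k‖ ≤ ‖a‖ * znorm k := by
  rw [dotZ_eq_inner, mul_comm, ← norm_intVecC]
  exact norm_inner_le_norm _ _

lemma dotZ_sub (a : EuclideanSpace ℂ (Fin d)) (k k' : Fin d → ℤ) :
    dotZ a (k - k') = dotZ a k - dotZ a k' := by
  simp [dotZ, mul_sub, Finset.sum_sub_distrib]

lemma projP_eq_starProjection (k : Fin d → ℤ) (v : EuclideanSpace ℂ (Fin d)) :
    projP k v = (ℂ ∙ intVecC k)ᗮ.starProjection v := by
  rw [Submodule.starProjection_orthogonal_val, Submodule.starProjection_singleton, norm_intVecC,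
    znorm, Real.sq_sqrt (by positivity), ← dotZ_eq_inner]
  ext j
  simp [projP, intVecC]

lemma norm_projP_le (k : Fin d → ℤ) (v : EuclideanSpace ℂ (Fin d)) :
    ‖projP k v‖ ≤ ‖v‖ := by
  rw [projP_eq_starProjection]
  exact Submodule.norm_starProjection_apply_le _ v

lemma norm_Nterm_le {u : (Fin d → ℤ) → EuclideanSpace ℂ (Fin d)} (hdiv : divFree u)
    (k k₁ : Fin d → ℤ) :
    ‖Nterm u k k₁‖ ≤ ‖u k₁‖ * (znorm (k - k₁) * ‖u (k - k₁)‖) := by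
  by_cases h₁ : k₁ = 0
  · simp only [Nterm, if_pos h₁, norm_zero]
    exact mul_nonneg (norm_nonneg _) (mul_nonneg (Real.sqrt_nonneg _) (norm_nonneg _))
  have hdot : dotZ (u k₁) k = dotZ (u k₁) (k - k₁) := by rw [dotZ_sub, hdiv k₁, sub_zero]
  rw [Nterm, if_neg h₁, norm_smul, norm_mul, hdot, norm_neg, Complex.norm_I, one_mul]
  calc ‖dotZ (u k₁) (k - k₁)‖ * ‖projP k (u (k - k₁))‖
      ≤ (‖u k₁‖ * znorm (k - k₁)) * ‖u (k - k₁)‖ :=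
        mul_le_mul (norm_dotZ_le _ _) (norm_projP_le _ _) (norm_nonneg _)
          (mul_nonneg (norm_nonneg _) (Real.sqrt_nonneg _))
    _ = ‖u k₁‖ * (znorm (k - k₁) * ‖u (k - k₁)‖) := mul_assoc _ _ _

end

theorem nonlinearity_le_sqrt_energy_mul_sqrt_enstrophy_general (d : ℕ)
    (u : (Fin d → ℤ) → EuclideanSpace ℂ (Fin d))
    (hdiv : divFree u)
    (hE : Summable fun k : Fin d → ℤ => ‖u k‖^2)
    (hV : Summable fun k : Fin d → ℤ => (znorm k)^2 * ‖u k‖^2) :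
    ∀ k : Fin d → ℤ, k ≠ 0 →
      Summable (fun k1 => ‖Nterm u k k1‖) ∧
      ‖Nfun u k‖ ≤ Real.sqrt (energy u) * Real.sqrt (enstrophy u) := by
  intro k _
  set V : (Fin d → ℤ) → ℝ := fun m => znorm m ^ 2 * ‖u m‖ ^ 2
  have hshift :
      (fun k₁ => (znorm (k - k₁) * ‖u (k - k₁)‖) ^ 2) = fun k₁ => V (Equiv.subLeft k k₁) := by
    ext k₁
    simp [V, mul_pow]
  obtain ⟨hsum, hCS⟩ := Real.summable_mul_and_tsum_mul_le_sqrt_mul_sqrt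
    (f := fun k₁ => ‖u k₁‖) (g := fun k₁ => znorm (k - k₁) * ‖u (k - k₁)‖)
    (fun _ => norm_nonneg _) (fun _ => mul_nonneg (Real.sqrt_nonneg _) (norm_nonneg _))
    hE (hshift ▸ (Equiv.subLeft k).summable_iff.mpr hV)
  have hN : Summable fun k₁ => ‖Nterm u k k₁‖ :=
    .of_nonneg_of_le (fun _ => norm_nonneg _) (norm_Nterm_le hdiv k) hsum
  refine ⟨hN, ?_⟩
  calc ‖Nfun u k‖ ≤ ∑' k₁, ‖Nterm u k k₁‖ := norm_tsum_le_tsum_norm hN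
    _ ≤ _ := hN.tsum_le_tsum (norm_Nterm_le hdiv k) hsum
    _ ≤ _ := hCS
    _ = √(energy u) * √(enstrophy u) := by rw [hshift, (Equiv.subLeft k).tsum_eq V]; rfl

/-- For `d ≥ 2` and a divergence-free `u : ℤ^d → ℂ^d` with `u_0 = 0`, finite energy and
finite enstrophy, the series defining `N_k(u)` converges absolutely and
`|N_k(u)| ≤ √(E(u)) √(V(u))` for every `k ≠ 0`. -/
theorem nonlinearity_le_sqrt_energy_mul_sqrt_enstrophy (d : ℕ) (hd : 2 ≤ d)
    (u : (Fin d → ℤ) → EuclideanSpace ℂ (Fin d))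
    (hdiv : divFree u) (h0 : u 0 = 0)
    (hE : Summable fun k : Fin d → ℤ => ‖u k‖^2)
    (hV : Summable fun k : Fin d → ℤ => (znorm k)^2 * ‖u k‖^2) :
    ∀ k : Fin d → ℤ, k ≠ 0 →
      Summable (fun k1 => ‖Nterm u k k1‖) ∧
      ‖Nfun u k‖ ≤ Real.sqrt (energy u) * Real.sqrt (enstrophy u) :=
  nonlinearity_le_sqrt_energy_mul_sqrt_enstrophy_general d u hdiv hE hV
end
end

section
/- Let d = 2, ν > 0, n ≥ 1, and let f_k : ℝ → ℂ² (defined for 0 < |k| ≤ n) be a continuous forcing. Let u be a solution of the symmetric Galerkin projection of order n of the Navier–Stokes Fourier system with forcing f, which is real and divergence-free. Then for every t, the enstrophy V(u(t)) = Σ_{0<|k|≤n} |k|²|u_k(t)|² satisfies d/dt V(u(t)) ≤ −2ν V(u(t)) + 2 √(V(f(t))) √(V(u(t))), where V(f(t)) = Σ_{0<|k|≤n} |k|²|f_k(t)|². -/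
noncomputable section

open scoped BigOperators

/-!
Each mode contributes `2|k|² Re⟨u_k, du_k/dt⟩` to `dV/dt`. Against the divergence-free `u_k` the
projection `Π_k` is invisible, the viscous term gives `-2ν Σ |k|⁴|u_k|² ≤ -2ν V` because
`|k| ≥ 1` on nonzero lattice points, and Cauchy–Schwarz bounds the forcing term.
The nonlinear contribution vanishes in two dimensions: by the reality condition it is a sum over
triads `a + b + c = 0` of the modes, invariant under permuting the triad, and writing each
divergence-free `u_k` as `α_k k^⊥`, the six permuted terms of a triad add up to
`α_a α_b α_c` times a polynomial in `a, b, c` which vanishes when `c = -a - b`.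
-/

open scoped InnerProductSpace ComplexConjugate

section Lattice

variable {d : ℕ}

lemma znorm_sq (k : Fin d → ℤ) : znorm k ^ 2 = ∑ i, (k i : ℝ) ^ 2 :=
  Real.sq_sqrt (by positivity)

lemma znorm_zero : znorm (0 : Fin d → ℤ) = 0 := by
  simp [znorm]

lemma znorm_neg (k : Fin d → ℤ) : znorm (-k) = znorm k := by
  simp [znorm]

lemma abs_apply_le_znorm (k : Fin d → ℤ) (i : Fin d) : |(k i : ℝ)| ≤ znorm k :=
  Real.abs_le_sqrt <| Finset.single_le_sum (f := fun j => (k j : ℝ) ^ 2)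
    (fun _ _ => sq_nonneg _) (Finset.mem_univ i)

lemma one_le_znorm_sq {k : Fin d → ℤ} (hk : k ≠ 0) : 1 ≤ znorm k ^ 2 := by
  obtain ⟨i, hi⟩ := Function.ne_iff.mp hk
  calc (1 : ℝ) ≤ (k i : ℝ) ^ 2 :=
        (one_le_sq_iff_one_le_abs _).mpr (by exact_mod_cast Int.one_le_abs hi)
    _ ≤ znorm k ^ 2 := by
        rw [znorm_sq]
        exact Finset.single_le_sum (f := fun j => (k j : ℝ) ^ 2)
          (fun _ _ => sq_nonneg _) (Finset.mem_univ i)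

def galerkinModes (n : ℝ) : Finset (Fin d → ℤ) :=
  (Fintype.piFinset fun _ => Finset.Icc (-⌈n⌉) ⌈n⌉).filter fun k => k ≠ 0 ∧ znorm k ≤ n

lemma mem_galerkinModes {n : ℝ} {k : Fin d → ℤ} :
    k ∈ galerkinModes n ↔ k ≠ 0 ∧ znorm k ≤ n := by
  refine Finset.mem_filter.trans (and_iff_right_of_imp fun ⟨_, hkn⟩ =>
    Fintype.mem_piFinset.mpr fun i => Finset.mem_Icc.mpr ?_)
  have hki := abs_le.mp ((abs_apply_le_znorm k i).trans (hkn.trans (Int.le_ceil n)))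
  exact ⟨by exact_mod_cast hki.1, by exact_mod_cast hki.2⟩

lemma neg_mem_galerkinModes {n : ℝ} {k : Fin d → ℤ} :
    -k ∈ galerkinModes n ↔ k ∈ galerkinModes n := by
  simp [mem_galerkinModes, znorm_neg]

lemma enstrophy_eq_sum {n : ℝ} {g : (Fin d → ℤ) → EuclideanSpace ℂ (Fin d)}
    (hg : ∀ k, n < znorm k → g k = 0) :
    enstrophy g = ∑ k ∈ galerkinModes n, znorm k ^ 2 * ‖g k‖ ^ 2 := by
  refine tsum_eq_sum fun k hk => ?_
  rw [mem_galerkinModes, not_and_or, not_not, not_le] at hk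
  rcases hk with rfl | hk
  · simp [znorm_zero]
  · simp [hg k hk]

lemma IsGalerkinSol.apply_eq_zero {ν n : ℝ} {f u : ℝ → (Fin d → ℤ) → EuclideanSpace ℂ (Fin d)}
    (hu : IsGalerkinSol ν n f u) (t : ℝ) {k : Fin d → ℤ} (hk : k ∉ galerkinModes n) :
    u t k = 0 := by
  rw [mem_galerkinModes, not_and_or, not_not, not_le] at hk
  rcases hk with rfl | hk
  exacts [hu.1 t, hu.2.1 t k hk]

end Lattice

section Energy

variable {d : ℕ}

lemma inner_projP_left (k : Fin d → ℤ) (x : EuclideanSpace ℂ (Fin d))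
    {y : EuclideanSpace ℂ (Fin d)} (hy : dotZ y k = 0) : ⟪projP k x, y⟫_ℂ = ⟪x, y⟫_ℂ := by
  set c : ℂ := dotZ x k / ((∑ i, ((k i : ℝ)) ^ 2 : ℝ) : ℂ)
  have hk : ∑ j, conj (c * k j) * y j = 0 := by
    simp only [map_mul, map_intCast, mul_assoc, ← Finset.mul_sum]
    simp only [dotZ, mul_comm (y _)] at hy
    rw [hy, mul_zero]
  simp only [PiLp.inner_apply, RCLike.inner_apply', projP, map_sub, sub_mul,
    Finset.sum_sub_distrib]
  rw [hk, sub_zero]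

lemma EuclideanSpace.real_inner_eq_re_inner (x y : EuclideanSpace ℂ (Fin d)) :
    ⟪x, y⟫_ℝ = (⟪x, y⟫_ℂ).re := by
  simp only [PiLp.inner_apply, Complex.re_sum]
  exact Finset.sum_congr rfl fun i _ => _root_.real_inner_eq_re_inner ℂ (x i) (y i)

lemma tsum_Nterm_eq_sum {n : ℝ} {v : (Fin d → ℤ) → EuclideanSpace ℂ (Fin d)}
    (hv : ∀ k ∉ galerkinModes n, v k = 0) (k : Fin d → ℤ) :
    ∑' k1, Nterm v k k1 = ∑ k1 ∈ galerkinModes n, Nterm v k k1 :=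
  tsum_eq_sum fun k1 hk1 => by simp [Nterm, hv k1 hk1, dotZ]

lemma IsGalerkinSol.hasDerivAt_enstrophy {ν n : ℝ}
    {f u : ℝ → (Fin d → ℤ) → EuclideanSpace ℂ (Fin d)} (hu : IsGalerkinSol ν n f u) (t : ℝ) :
    HasDerivAt (fun s => enstrophy (u s))
      (∑ k ∈ galerkinModes n, znorm k ^ 2 * (2 * ⟪u t k, GalerkinRHS ν (f t k) (u t) k⟫_ℝ)) t := by
  have hV : (fun s => enstrophy (u s))
      = fun s => ∑ k ∈ galerkinModes n, znorm k ^ 2 * ‖u s k‖ ^ 2 :=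
    funext fun s => enstrophy_eq_sum (hu.2.1 s)
  rw [hV]
  refine HasDerivAt.fun_sum fun k hk => ?_
  obtain ⟨hk0, hkn⟩ := mem_galerkinModes.mp hk
  exact (hu.2.2 t k hk0 hkn).norm_sq.const_mul _

lemma real_inner_galerkinRHS {ν n : ℝ} (fk : EuclideanSpace ℂ (Fin d))
    {v : (Fin d → ℤ) → EuclideanSpace ℂ (Fin d)} (hv : ∀ k ∉ galerkinModes n, v k = 0)
    {k : Fin d → ℤ} (hk : dotZ (v k) k = 0) :
    ⟪v k, GalerkinRHS ν fk v k⟫_ℝ = ⟪v k, ∑ k1 ∈ galerkinModes n, Nterm v k k1⟫_ℝ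
      - ν * znorm k ^ 2 * ‖v k‖ ^ 2 + ⟪v k, fk⟫_ℝ := by
  have hproj : ⟪v k, projP k fk⟫_ℝ = ⟪v k, fk⟫_ℝ := by
    rw [EuclideanSpace.real_inner_eq_re_inner, EuclideanSpace.real_inner_eq_re_inner,
      ← inner_conj_symm, inner_projP_left k fk hk, inner_conj_symm]
  rw [GalerkinRHS, tsum_Nterm_eq_sum hv, inner_add_right, inner_sub_right,
    Complex.coe_smul, real_inner_smul_right, real_inner_self_eq_norm_sq, hproj]

end Energy

section Triads

variable {A M : Type*} [AddCommGroup A] [DecidableEq A] [AddCommMonoid M] (S : Finset A)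

def triads : Finset (A × A × A) :=
  (S ×ˢ S ×ˢ S).filter fun t => t.1 + t.2.1 + t.2.2 = 0

lemma mem_triads {a b c : A} :
    (a, b, c) ∈ triads S ↔ a ∈ S ∧ b ∈ S ∧ c ∈ S ∧ a + b + c = 0 := by
  simp [triads, and_assoc]

lemma sum_triads_rotate (F : A × A × A → M) :
    ∑ t ∈ triads S, F (t.2.1, t.2.2, t.1) = ∑ t ∈ triads S, F t := by
  refine Finset.sum_nbij' (fun t => (t.2.1, t.2.2, t.1)) (fun t => (t.2.2, t.1, t.2.1)) ?_ ?_
    (fun _ _ => rfl) (fun _ _ => rfl) (fun _ _ => rfl)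
  · rintro ⟨a, b, c⟩ h
    obtain ⟨ha, hb, hc, habc⟩ := (mem_triads S).mp h
    exact (mem_triads S).mpr ⟨hb, hc, ha, by rw [← habc]; abel⟩
  · rintro ⟨a, b, c⟩ h
    obtain ⟨ha, hb, hc, habc⟩ := (mem_triads S).mp h
    exact (mem_triads S).mpr ⟨hc, ha, hb, by rw [← habc]; abel⟩

lemma sum_triads_swap (F : A × A × A → M) :
    ∑ t ∈ triads S, F (t.2.1, t.1, t.2.2) = ∑ t ∈ triads S, F t := by
  refine Finset.sum_nbij' (fun t => (t.2.1, t.1, t.2.2)) (fun t => (t.2.1, t.1, t.2.2)) ?_ ?_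
    (fun _ _ => rfl) (fun _ _ => rfl) (fun _ _ => rfl)
  all_goals
    rintro ⟨a, b, c⟩ h
    obtain ⟨ha, hb, hc, habc⟩ := (mem_triads S).mp h
    exact (mem_triads S).mpr ⟨hb, ha, hc, by rw [← habc]; abel⟩

lemma sum_triads_eq_zero [IsAddTorsionFree M] (F : A × A × A → M)
    (hF : ∀ a b c, (a, b, c) ∈ triads S →
      F (a, b, c) + F (b, a, c) + F (b, c, a) + F (c, b, a) + F (c, a, b) + F (a, c, b) = 0) :
    ∑ t ∈ triads S, F t = 0 := by
  have hswap := sum_triads_swap S F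
  have hrot := sum_triads_rotate S F
  have hrot2 : ∑ t ∈ triads S, F (t.2.2, t.1, t.2.1) = ∑ t ∈ triads S, F t :=
    (sum_triads_rotate S fun t => F (t.2.1, t.2.2, t.1)).trans hrot
  have hswaprot : ∑ t ∈ triads S, F (t.2.2, t.2.1, t.1) = ∑ t ∈ triads S, F t :=
    (sum_triads_rotate S fun t => F (t.2.1, t.1, t.2.2)).trans hswap
  have hswaprot2 : ∑ t ∈ triads S, F (t.1, t.2.2, t.2.1) = ∑ t ∈ triads S, F t :=
    (sum_triads_rotate S fun t => F (t.2.2, t.2.1, t.1)).trans hswaprot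
  refine nsmul_right_injective (M := M) (n := 6) (by norm_num) ?_
  calc 6 • ∑ t ∈ triads S, F t
      = ∑ t ∈ triads S, (F t + F (t.2.1, t.1, t.2.2) + F (t.2.1, t.2.2, t.1)
          + F (t.2.2, t.2.1, t.1) + F (t.2.2, t.1, t.2.1) + F (t.1, t.2.2, t.2.1)) := by
        simp only [Finset.sum_add_distrib, hswap, hrot, hrot2, hswaprot, hswaprot2]
        abel
    _ = 6 • 0 := by
        rw [smul_zero]
        exact Finset.sum_eq_zero fun ⟨a, b, c⟩ h => hF a b c h

end Triads

section Nonlinear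

variable {d : ℕ}

/-- For a triad `a + b + c = 0`, the contribution `|c|² ⟨(N_c)_{k₁}, v_c⟩` of the summand
`k₁ = -a` of the nonlinearity, once the reality condition has turned `conj v_k` into `v_{-k}`. -/
def triadTerm (v : (Fin d → ℤ) → EuclideanSpace ℂ (Fin d))
    (t : (Fin d → ℤ) × (Fin d → ℤ) × (Fin d → ℤ)) : ℂ :=
  ((znorm t.2.2 ^ 2 : ℝ) : ℂ) * Complex.I * dotZ (v t.1) t.2.2 * ∑ j, v t.2.1 j * v t.2.2 j

lemma mem_of_triadTerm_ne_zero {S : Finset (Fin d → ℤ)}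
    {v : (Fin d → ℤ) → EuclideanSpace ℂ (Fin d)} (hv : ∀ k ∉ S, v k = 0)
    {a b c : Fin d → ℤ} (h : triadTerm v (a, b, c) ≠ 0) : a ∈ S ∧ b ∈ S ∧ c ∈ S := by
  refine ⟨?_, ?_, ?_⟩ <;> by_contra hx <;> simp [triadTerm, hv _ hx, dotZ] at h

lemma conj_dotZ_of_realSeq {v : (Fin d → ℤ) → EuclideanSpace ℂ (Fin d)} (hre : realSeq v)
    (k k' : Fin d → ℤ) : conj (dotZ (v k) k') = dotZ (v (-k)) k' := by
  simp only [dotZ, map_sum, map_mul, map_intCast, ← hre k]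

lemma inner_eq_sum_of_realSeq {v : (Fin d → ℤ) → EuclideanSpace ℂ (Fin d)} (hre : realSeq v)
    (k : Fin d → ℤ) (w : EuclideanSpace ℂ (Fin d)) : ⟪v k, w⟫_ℂ = ∑ j, v (-k) j * w j := by
  simp only [PiLp.inner_apply, RCLike.inner_apply', ← hre k]

lemma znorm_sq_mul_inner_Nterm {v : (Fin d → ℤ) → EuclideanSpace ℂ (Fin d)} (hre : realSeq v)
    {k k1 : Fin d → ℤ} (hk : dotZ (v k) k = 0) (hk1 : k1 ≠ 0) :
    ((znorm k ^ 2 : ℝ) : ℂ) * ⟪Nterm v k k1, v k⟫_ℂ = triadTerm v (-k1, k1 - k, k) := by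
  rw [Nterm, if_neg hk1, inner_smul_left, inner_projP_left _ _ hk, inner_eq_sum_of_realSeq hre,
    neg_sub, map_mul, conj_dotZ_of_realSeq hre, map_neg, Complex.conj_I, neg_neg, triadTerm]
  ring

lemma sum_sum_inner_Nterm_eq_sum_triads {n : ℝ} {v : (Fin d → ℤ) → EuclideanSpace ℂ (Fin d)}
    (hv : ∀ k ∉ galerkinModes n, v k = 0) (hre : realSeq v) (hdv : divFree v) :
    ∑ k ∈ galerkinModes n, ∑ k1 ∈ galerkinModes n,
        ((znorm k ^ 2 : ℝ) : ℂ) * ⟪Nterm v k k1, v k⟫_ℂ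
      = ∑ t ∈ triads (galerkinModes n), triadTerm v t := by
  set S : Finset (Fin d → ℤ) := galerkinModes n
  calc _ = ∑ p ∈ S ×ˢ S, triadTerm v (-p.2, p.2 - p.1, p.1) := by
        rw [← Finset.sum_product']
        exact Finset.sum_congr rfl fun p hp =>
          znorm_sq_mul_inner_Nterm hre (hdv _) (mem_galerkinModes.mp (Finset.mem_product.mp hp).2).1
    _ = ∑ t ∈ triads S, triadTerm v t := by
        refine Finset.sum_bij_ne_zero (fun p _ _ => (-p.2, p.2 - p.1, p.1)) ?_ ?_ ?_
          (fun _ _ _ => rfl)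
        · rintro ⟨k, k1⟩ - hne
          obtain ⟨ha, hb, hc⟩ := mem_of_triadTerm_ne_zero hv hne
          exact (mem_triads S).mpr ⟨ha, hb, hc, by abel⟩
        · rintro ⟨k, k1⟩ - - ⟨k', k1'⟩ - - h
          simp only [Prod.mk.injEq, neg_inj] at h
          rw [h.1, h.2.2]
        · rintro ⟨a, b, c⟩ ht hne
          obtain ⟨ha, -, hc, habc⟩ := (mem_triads S).mp ht
          obtain rfl : b = -a - c := by linear_combination habc
          have hpre : (-(-a), -a - c, c) = (a, -a - c, c) := by rw [neg_neg]
          exact ⟨(c, -a), Finset.mem_product.mpr ⟨hc, neg_mem_galerkinModes.mpr ha⟩,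
            by simpa only [hpre] using hne, hpre⟩

lemma sum_real_inner_Nterm_eq_re_sum_triads {n : ℝ}
    {v : (Fin d → ℤ) → EuclideanSpace ℂ (Fin d)}
    (hv : ∀ k ∉ galerkinModes n, v k = 0) (hre : realSeq v) (hdv : divFree v) :
    ∑ k ∈ galerkinModes n, znorm k ^ 2 * ⟪v k, ∑ k1 ∈ galerkinModes n, Nterm v k k1⟫_ℝ
      = (∑ t ∈ triads (galerkinModes n), triadTerm v t).re := by
  rw [← sum_sum_inner_Nterm_eq_sum_triads hv hre hdv, Complex.re_sum]
  refine Finset.sum_congr rfl fun k _ => ?_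
  rw [EuclideanSpace.real_inner_eq_re_inner, ← inner_conj_symm, Complex.conj_re, sum_inner,
    ← Finset.mul_sum, Complex.re_ofReal_mul]

end Nonlinear

section TwoDimensional

lemma exists_eq_smul_perp {w : EuclideanSpace ℂ (Fin 2)} {k : Fin 2 → ℤ} (hk : k ≠ 0)
    (hw : dotZ w k = 0) : ∃ α : ℂ, w 0 = -α * k 1 ∧ w 1 = α * k 0 := by
  have hq : (k 0 : ℂ) ^ 2 + (k 1 : ℂ) ^ 2 ≠ 0 := by
    have h := one_le_znorm_sq hk
    rw [znorm_sq, Fin.sum_univ_two] at h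
    exact_mod_cast (by positivity : (k 0 : ℝ) ^ 2 + (k 1 : ℝ) ^ 2 ≠ 0)
  simp only [dotZ, Fin.sum_univ_two] at hw
  refine ⟨(k 0 * w 1 - k 1 * w 0) / ((k 0 : ℂ) ^ 2 + (k 1 : ℂ) ^ 2), ?_, ?_⟩ <;> field_simp
  · linear_combination (k 0 : ℂ) * hw
  · linear_combination (k 1 : ℂ) * hw

lemma triadTerm_sum_perm_eq_zero {v : (Fin 2 → ℤ) → EuclideanSpace ℂ (Fin 2)} (hdv : divFree v)
    {a b c : Fin 2 → ℤ} (ha : a ≠ 0) (hb : b ≠ 0) (hc : c ≠ 0) (habc : a + b + c = 0) :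
    triadTerm v (a, b, c) + triadTerm v (b, a, c) + triadTerm v (b, c, a)
      + triadTerm v (c, b, a) + triadTerm v (c, a, b) + triadTerm v (a, c, b) = 0 := by
  obtain ⟨α, ha0, ha1⟩ := exists_eq_smul_perp ha (hdv a)
  obtain ⟨β, hb0, hb1⟩ := exists_eq_smul_perp hb (hdv b)
  obtain ⟨γ, hc0, hc1⟩ := exists_eq_smul_perp hc (hdv c)
  have hc' : ∀ i, (c i : ℂ) = -a i - b i := fun i => by
    have hi : a i + b i + c i = 0 := by simpa using congrFun habc i
    rw [show c i = -a i - b i by linear_combination hi]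
    push_cast
    ring
  simp only [triadTerm, dotZ, znorm_sq, Fin.sum_univ_two, ha0, ha1, hb0, hb1, hc0, hc1]
  push_cast
  simp only [hc']
  ring

lemma sum_triads_triadTerm_eq_zero {n : ℝ} {v : (Fin 2 → ℤ) → EuclideanSpace ℂ (Fin 2)}
    (hdv : divFree v) : ∑ t ∈ triads (galerkinModes n), triadTerm v t = 0 :=
  sum_triads_eq_zero _ _ fun a b c h => by
    obtain ⟨ha, hb, hc, habc⟩ := (mem_triads _).mp h
    exact triadTerm_sum_perm_eq_zero hdv (mem_galerkinModes.mp ha).1 (mem_galerkinModes.mp hb).1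
      (mem_galerkinModes.mp hc).1 habc

end TwoDimensional

section Estimates

variable {d : ℕ}

lemma sum_real_inner_galerkinRHS {ν n : ℝ} (g v : (Fin d → ℤ) → EuclideanSpace ℂ (Fin d))
    (hv : ∀ k ∉ galerkinModes n, v k = 0) (hdv : divFree v) :
    ∑ k ∈ galerkinModes n, znorm k ^ 2 * (2 * ⟪v k, GalerkinRHS ν (g k) v k⟫_ℝ)
      = 2 * ∑ k ∈ galerkinModes n, znorm k ^ 2 * ⟪v k, ∑ k1 ∈ galerkinModes n, Nterm v k k1⟫_ℝ
        - 2 * ν * ∑ k ∈ galerkinModes n, znorm k ^ 4 * ‖v k‖ ^ 2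
        + 2 * ∑ k ∈ galerkinModes n, znorm k ^ 2 * ⟪v k, g k⟫_ℝ := by
  simp only [Finset.mul_sum, ← Finset.sum_sub_distrib, ← Finset.sum_add_distrib]
  refine Finset.sum_congr rfl fun k _ => ?_
  rw [real_inner_galerkinRHS _ hv (hdv k)]
  ring

lemma enstrophy_le_sum_znorm_pow_four {n : ℝ} {v : (Fin d → ℤ) → EuclideanSpace ℂ (Fin d)}
    (hv : ∀ k, n < znorm k → v k = 0) :
    enstrophy v ≤ ∑ k ∈ galerkinModes n, znorm k ^ 4 * ‖v k‖ ^ 2 := by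
  rw [enstrophy_eq_sum hv]
  refine Finset.sum_le_sum fun k hk => ?_
  have h := one_le_znorm_sq (mem_galerkinModes.mp hk).1
  calc znorm k ^ 2 * ‖v k‖ ^ 2 ≤ znorm k ^ 2 * znorm k ^ 2 * ‖v k‖ ^ 2 := by
        gcongr
        exact le_mul_of_one_le_left (by positivity) h
    _ = znorm k ^ 4 * ‖v k‖ ^ 2 := by ring

lemma sum_real_inner_le_sqrt_enstrophy_mul {n : ℝ} {g v : (Fin d → ℤ) → EuclideanSpace ℂ (Fin d)}
    (hg : ∀ k, n < znorm k → g k = 0) (hv : ∀ k, n < znorm k → v k = 0) :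
    ∑ k ∈ galerkinModes n, znorm k ^ 2 * ⟪v k, g k⟫_ℝ
      ≤ √(enstrophy g) * √(enstrophy v) := by
  rw [enstrophy_eq_sum hg, enstrophy_eq_sum hv]
  calc _ ≤ ∑ k ∈ galerkinModes n, (znorm k * ‖g k‖) * (znorm k * ‖v k‖) :=
        Finset.sum_le_sum fun k _ => by
          have := real_inner_le_norm (v k) (g k)
          nlinarith [sq_nonneg (znorm k)]
    _ ≤ _ := by
        simpa only [mul_pow] using Real.sum_mul_le_sqrt_mul_sqrt (galerkinModes n)
          (fun k => znorm k * ‖g k‖) (fun k => znorm k * ‖v k‖)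

end Estimates

theorem enstrophy_derivative_inequality_2d_general (ν : ℝ) (hν : 0 < ν) (n : ℝ)
    (f : ℝ → (Fin 2 → ℤ) → EuclideanSpace ℂ (Fin 2))
    (hfsupp : ∀ t k, n < znorm k → f t k = 0)
    (u : ℝ → (Fin 2 → ℤ) → EuclideanSpace ℂ (Fin 2))
    (hu : IsGalerkinSol ν n f u)
    (hreal : ∀ t, realSeq (u t)) (hdiv : ∀ t, divFree (u t)) :
    ∀ t : ℝ, ∃ dV : ℝ, HasDerivAt (fun s => enstrophy (u s)) dV t ∧
      dV ≤ -2 * ν * enstrophy (u t)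
            + 2 * Real.sqrt (enstrophy (f t)) * Real.sqrt (enstrophy (u t)) := by
  intro t
  have hsupp : ∀ k ∉ galerkinModes n, u t k = 0 := fun _ => hu.apply_eq_zero t
  refine ⟨_, hu.hasDerivAt_enstrophy t, ?_⟩
  rw [sum_real_inner_galerkinRHS _ _ hsupp (hdiv t),
    sum_real_inner_Nterm_eq_re_sum_triads hsupp (hreal t) (hdiv t),
    sum_triads_triadTerm_eq_zero (hdiv t), Complex.zero_re]
  have hdissipation := enstrophy_le_sum_znorm_pow_four (hu.2.1 t)
  have hforcing := sum_real_inner_le_sqrt_enstrophy_mul (hfsupp t) (hu.2.1 t)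
  nlinarith

/-- 2D enstrophy inequality: along any real divergence-free solution of a symmetric
Galerkin projection of the Navier–Stokes Fourier system,
`d/dt V(u(t)) ≤ -2ν V(u(t)) + 2 √(V(f(t))) √(V(u(t)))`. -/
theorem enstrophy_derivative_inequality_2d (ν : ℝ) (hν : 0 < ν) (n : ℝ) (hn : 1 ≤ n)
    (f : ℝ → (Fin 2 → ℤ) → EuclideanSpace ℂ (Fin 2))
    (hf0 : ∀ t, f t 0 = 0) (hfsupp : ∀ t k, n < znorm k → f t k = 0)
    (hfc : ∀ k, Continuous fun t => f t k)
    (u : ℝ → (Fin 2 → ℤ) → EuclideanSpace ℂ (Fin 2))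
    (hu : IsGalerkinSol ν n f u)
    (hreal : ∀ t, realSeq (u t)) (hdiv : ∀ t, divFree (u t)) :
    ∀ t : ℝ, ∃ dV : ℝ, HasDerivAt (fun s => enstrophy (u s)) dV t ∧
      dV ≤ -2 * ν * enstrophy (u t)
            + 2 * Real.sqrt (enstrophy (f t)) * Real.sqrt (enstrophy (u t)) :=
  enstrophy_derivative_inequality_2d_general ν hν n f hfsupp u hu hreal hdiv
end
end

section
/- Let d ≥ 2, ν > 0, n ≥ 1, and let f_k : ℝ → ℂ^d (defined for 0 < |k| ≤ n) be a continuous forcing. Let u be a solution of the symmetric Galerkin projection of order n of the Navier–Stokes Fourier system with forcing f, which is real and divergence-free. Then for every t, the energy E(u(t)) = Σ_{0<|k|≤n} |u_k(t)|² satisfies d/dt E(u(t)) ≤ −2ν E(u(t)) + 2 √(E(u(t))) √(E(f(t))), where E(f(t)) = Σ_{0<|k|≤n} |f_k(t)|². -/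
noncomputable section

open scoped BigOperators

/-!
Pairing the equation for `u_k` with `u_k` and summing over the finitely many active modes gives
`E' = 2 Re Σ ⟪u_k, N_k(u)⟫ - 2ν Σ |k|² ‖u_k‖² + 2 Re Σ ⟪u_k, Π_k f_k⟫`.
For real divergence-free `u` the triad term `⟪u_k, (u_{k1}·k) Π_k u_{k-k1}⟫` changes sign under the
involution `(k, k1) ↦ (k1 - k, k1)`, so the nonlinear sum vanishes. Since `u_0 = 0` and `|k| ≥ 1`
for `k ≠ 0`, the viscous term is at most `-2νE(u)`. Finally `Π_k` is the orthogonal projection onto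
`k^⊥`, hence a contraction, and Cauchy–Schwarz bounds the forcing term by `2 √E(u) √E(f)`.
-/

namespace Galerkin

open Finset ComplexConjugate

variable {d : ℕ}

local notation "⟪" x ", " y "⟫" => inner ℂ x y

lemma znorm_sq (k : Fin d → ℤ) : znorm k ^ 2 = ∑ i, (k i : ℝ) ^ 2 :=
  Real.sq_sqrt (sum_nonneg fun _ _ => sq_nonneg _)

lemma sq_le_sum_sq (k : Fin d → ℤ) (i : Fin d) : (k i : ℝ) ^ 2 ≤ ∑ j, (k j : ℝ) ^ 2 :=
  single_le_sum (f := fun j => (k j : ℝ) ^ 2) (fun _ _ => sq_nonneg _) (mem_univ i)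

lemma one_le_znorm_sq {k : Fin d → ℤ} (hk : k ≠ 0) : 1 ≤ znorm k ^ 2 := by
  obtain ⟨i, hi⟩ := Function.ne_iff.mp hk
  have hki : (1 : ℤ) ≤ k i ^ 2 := one_le_sq_iff_one_le_abs _ |>.mpr (Int.one_le_abs hi)
  rw [znorm_sq]
  exact le_trans (by exact_mod_cast hki) (sq_le_sum_sq k i)

def box (d : ℕ) (n : ℝ) : Finset (Fin d → ℤ) := Icc (fun _ => -⌈n⌉) (fun _ => ⌈n⌉)

lemma mem_box_of_znorm_le {n : ℝ} {k : Fin d → ℤ} (hk : znorm k ≤ n) : k ∈ box d n := by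
  have hki (i : Fin d) : |(k i : ℝ)| ≤ ⌈n⌉ :=
    ((Real.abs_le_sqrt (sq_le_sum_sq k i)).trans hk).trans (Int.le_ceil n)
  exact mem_Icc.mpr ⟨fun i => by exact_mod_cast (abs_le.mp (hki i)).1,
    fun i => by exact_mod_cast (abs_le.mp (hki i)).2⟩

lemma lt_znorm_of_notMem_box {n : ℝ} {k : Fin d → ℤ} (hk : k ∉ box d n) : n < znorm k :=
  lt_of_not_ge fun h => hk (mem_box_of_znorm_le h)

lemma tsum_eq_sum_box {M : Type*} [AddCommMonoid M] [TopologicalSpace M] {n : ℝ}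
    {F : (Fin d → ℤ) → M} (hF : ∀ k, n < znorm k → F k = 0) :
    ∑' k, F k = ∑ k ∈ box d n, F k :=
  tsum_eq_sum fun k hk => hF k (lt_znorm_of_notMem_box hk)

lemma energy_eq_sum_box {n : ℝ} {v : (Fin d → ℤ) → EuclideanSpace ℂ (Fin d)}
    (hv : ∀ k, n < znorm k → v k = 0) : energy v = ∑ k ∈ box d n, ‖v k‖ ^ 2 :=
  tsum_eq_sum_box fun k hk => by rw [hv k hk, norm_zero, zero_pow two_ne_zero]

lemma norm_sq_le_znorm_sq_mul {v : (Fin d → ℤ) → EuclideanSpace ℂ (Fin d)} (h0 : v 0 = 0)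
    (k : Fin d → ℤ) : ‖v k‖ ^ 2 ≤ znorm k ^ 2 * ‖v k‖ ^ 2 := by
  rcases eq_or_ne k 0 with rfl | hk
  · simp [h0]
  · exact le_mul_of_one_le_left (sq_nonneg _) (one_le_znorm_sq hk)

def kvec (k : Fin d → ℤ) : EuclideanSpace ℂ (Fin d) := WithLp.toLp 2 fun j => (k j : ℂ)

lemma inner_kvec_left (k : Fin d → ℤ) (v : EuclideanSpace ℂ (Fin d)) :
    ⟪kvec k, v⟫ = dotZ v k := by
  simp only [PiLp.inner_apply, RCLike.inner_apply, kvec, dotZ, map_intCast]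

lemma norm_kvec_sq (k : Fin d → ℤ) : ‖kvec k‖ ^ 2 = ∑ i, (k i : ℝ) ^ 2 := by
  simp [EuclideanSpace.norm_sq_eq, kvec]

lemma projP_eq_starProjection (k : Fin d → ℤ) (v : EuclideanSpace ℂ (Fin d)) :
    projP k v = (ℂ ∙ kvec k)ᗮ.starProjection v := by
  rw [Submodule.starProjection_orthogonal_val, Submodule.starProjection_singleton,
    inner_kvec_left, norm_kvec_sq]
  ext j
  simp [projP, kvec]

lemma norm_projP_le (k : Fin d → ℤ) (v : EuclideanSpace ℂ (Fin d)) : ‖projP k v‖ ≤ ‖v‖ := by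
  rw [projP_eq_starProjection]
  exact Submodule.norm_starProjection_apply_le _ v

lemma inner_projP_right_of_dotZ_eq_zero {k : Fin d → ℤ} {x : EuclideanSpace ℂ (Fin d)}
    (hx : dotZ x k = 0) (w : EuclideanSpace ℂ (Fin d)) : ⟪x, projP k w⟫ = ⟪x, w⟫ := by
  have hmem : x ∈ (ℂ ∙ kvec k)ᗮ :=
    Submodule.mem_orthogonal_singleton_iff_inner_right.mpr ((inner_kvec_left k x).trans hx)
  rw [projP_eq_starProjection, ← Submodule.inner_starProjection_left_eq_right,
    Submodule.starProjection_eq_self_iff.mpr hmem]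

lemma sum_re_inner_projP_le (s : Finset (Fin d → ℤ))
    (u f : (Fin d → ℤ) → EuclideanSpace ℂ (Fin d)) :
    ∑ k ∈ s, (⟪u k, projP k (f k)⟫).re ≤ √(∑ k ∈ s, ‖u k‖ ^ 2) * √(∑ k ∈ s, ‖f k‖ ^ 2) :=
  calc ∑ k ∈ s, (⟪u k, projP k (f k)⟫).re ≤ ∑ k ∈ s, ‖u k‖ * ‖f k‖ :=
        sum_le_sum fun _ _ => (re_inner_le_norm (𝕜 := ℂ) _ _).trans
          (mul_le_mul_of_nonneg_left (norm_projP_le _ _) (norm_nonneg _))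
    _ ≤ _ := Real.sum_mul_le_sqrt_mul_sqrt _ _ _

lemma tsum_eq_zero_of_comp_eq_neg {α G : Type*} [AddCommGroup G] [TopologicalSpace G]
    [IsTopologicalAddGroup G] [T2Space G] [IsAddTorsionFree G] (σ : Equiv.Perm α) {F : α → G}
    (hF : ∀ a, F (σ a) = -F a) : ∑' a, F a = 0 :=
  self_eq_neg.mp <| calc
    ∑' a, F a = ∑' a, F (σ a) := (σ.tsum_eq F).symm
    _ = ∑' a, -F a := by simp_rw [hF]
    _ = -∑' a, F a := tsum_neg

lemma dotZ_sub_right (a : EuclideanSpace ℂ (Fin d)) (p q : Fin d → ℤ) :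
    dotZ a (p - q) = dotZ a p - dotZ a q := by
  simp only [dotZ, ← sum_sub_distrib, Pi.sub_apply, Int.cast_sub, mul_sub]

section Nonlinear

variable {u : (Fin d → ℤ) → EuclideanSpace ℂ (Fin d)}

lemma inner_neg_neg_of_realSeq (hreal : realSeq u) (a b : Fin d → ℤ) :
    ⟪u (-a), u (-b)⟫ = ⟪u b, u a⟫ := by
  simp only [PiLp.inner_apply, RCLike.inner_apply, hreal a, hreal b, Complex.conj_conj]
  exact sum_congr rfl fun _ _ => mul_comm _ _

lemma inner_Nterm_sub_self (hdiv : divFree u) (hreal : realSeq u) (k k1 : Fin d → ℤ) :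
    ⟪u (k1 - k), Nterm u (k1 - k) k1⟫ = -⟪u k, Nterm u k k1⟫ := by
  unfold Nterm
  split_ifs
  · simp
  rw [inner_smul_right, inner_smul_right, inner_projP_right_of_dotZ_eq_zero (hdiv _),
    inner_projP_right_of_dotZ_eq_zero (hdiv _), dotZ_sub_right, hdiv k1,
    sub_sub_cancel_left, ← neg_sub k k1, inner_neg_neg_of_realSeq hreal]
  ring

lemma sum_inner_Nfun_eq_zero {n : ℝ} (hsupp : ∀ k, n < znorm k → u k = 0) (hdiv : divFree u)
    (hreal : realSeq u) : ∑ k ∈ box d n, ⟪u k, Nfun u k⟫ = 0 := by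
  have hNterm (k k1 : Fin d → ℤ) (hk1 : n < znorm k1) : Nterm u k k1 = 0 := by
    simp [Nterm, hsupp k1 hk1, dotZ]
  set T : (Fin d → ℤ) × (Fin d → ℤ) → ℂ := fun p => ⟪u p.1, Nterm u p.1 p.2⟫
  have hT : ∀ p ∉ box d n ×ˢ box d n, T p = 0 := by
    intro p hp
    rcases not_and_or.mp (mem_product.not.mp hp) with h | h
    · simp [T, hsupp _ (lt_znorm_of_notMem_box h)]
    · simp [T, hNterm _ _ (lt_znorm_of_notMem_box h)]
  let σ : Equiv.Perm ((Fin d → ℤ) × (Fin d → ℤ)) :=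
    Function.Involutive.toPerm (fun p => (p.2 - p.1, p.2)) fun p => by simp
  calc ∑ k ∈ box d n, ⟪u k, Nfun u k⟫ = ∑ p ∈ box d n ×ˢ box d n, T p := by
        rw [sum_product]
        refine sum_congr rfl fun k _ => ?_
        rw [Nfun, tsum_eq_sum_box (hNterm k), inner_sum]
    _ = ∑' p, T p := (tsum_eq_sum hT).symm
    _ = 0 := tsum_eq_zero_of_comp_eq_neg σ fun p => inner_Nterm_sub_self hdiv hreal p.1 p.2

end Nonlinear

lemma re_inner_galerkinRHS (ν : ℝ) (fk : EuclideanSpace ℂ (Fin d))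
    (u : (Fin d → ℤ) → EuclideanSpace ℂ (Fin d)) (k : Fin d → ℤ) :
    (⟪u k, GalerkinRHS ν fk u k⟫).re
      = (⟪u k, Nfun u k⟫).re - ν * (znorm k ^ 2 * ‖u k‖ ^ 2) + (⟪u k, projP k fk⟫).re := by
  rw [GalerkinRHS, inner_add_right, inner_sub_right, inner_smul_right, Complex.add_re,
    Complex.sub_re, Complex.re_ofReal_mul, ← RCLike.re_to_complex (x := ⟪u k, u k⟫),
    inner_self_eq_norm_sq, mul_assoc, Nfun]

/-- `EuclideanSpace ℂ ι` carries its own `PiLp` real inner product, not the one of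
`real_inner_eq_re_inner`; the two agree only propositionally. -/
lemma euclideanSpace_real_inner_eq_re_inner {ι : Type*} [Fintype ι] (x y : EuclideanSpace ℂ ι) :
    inner ℝ x y = (⟪x, y⟫).re := by
  rw [PiLp.inner_apply, PiLp.inner_apply, Complex.re_sum]
  rfl

section Solution

variable {ν n : ℝ} {f u : ℝ → (Fin d → ℤ) → EuclideanSpace ℂ (Fin d)}

theorem _root_.IsGalerkinSol.hasDerivAt_norm_sq (hu : IsGalerkinSol ν n f u) (t : ℝ)
    (k : Fin d → ℤ) :
    HasDerivAt (fun s => ‖u s k‖ ^ 2) (2 * (⟪u t k, GalerkinRHS ν (f t k) (u t) k⟫).re) t := by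
  obtain ⟨hu0, husupp, hderiv⟩ := hu
  by_cases hk : k ≠ 0 ∧ znorm k ≤ n
  · rw [← euclideanSpace_real_inner_eq_re_inner]
    exact (hderiv t k hk.1 hk.2).norm_sq
  · have hzero (s : ℝ) : u s k = 0 := by
      rcases not_and_or.mp hk with hk | hk
      · rw [not_not.mp hk]; exact hu0 s
      · exact husupp s k (not_le.mp hk)
    simpa [hzero] using hasDerivAt_const t (0 : ℝ)

theorem _root_.IsGalerkinSol.hasDerivAt_energy (hu : IsGalerkinSol ν n f u) (t : ℝ) :
    HasDerivAt (fun s => energy (u s))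
      (∑ k ∈ box d n, 2 * (⟪u t k, GalerkinRHS ν (f t k) (u t) k⟫).re) t := by
  simp only [energy_eq_sum_box (hu.2.1 _)]
  exact HasDerivAt.fun_sum fun k _ => hu.hasDerivAt_norm_sq t k

end Solution

end Galerkin

open Galerkin Finset in
theorem energy_derivative_inequality_general (d : ℕ) (ν : ℝ) (hν : 0 < ν)
    (n : ℝ)
    (f : ℝ → (Fin d → ℤ) → EuclideanSpace ℂ (Fin d))
    (hfsupp : ∀ t k, n < znorm k → f t k = 0)
    (u : ℝ → (Fin d → ℤ) → EuclideanSpace ℂ (Fin d))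
    (hu : IsGalerkinSol ν n f u)
    (hreal : ∀ t, realSeq (u t)) (hdiv : ∀ t, divFree (u t)) :
    ∀ t : ℝ, ∃ dE : ℝ, HasDerivAt (fun s => energy (u s)) dE t ∧
      dE ≤ -2 * ν * energy (u t)
            + 2 * Real.sqrt (energy (u t)) * Real.sqrt (energy (f t)) := by
  intro t
  refine ⟨_, hu.hasDerivAt_energy t, ?_⟩
  have hsupp := hu.2.1 t
  have hnl : ∑ k ∈ box d n, (inner ℂ (u t k) (Nfun (u t) k)).re = 0 := by
    rw [← Complex.re_sum, sum_inner_Nfun_eq_zero hsupp (hdiv t) (hreal t), Complex.zero_re]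
  have hvisc : energy (u t) ≤ ∑ k ∈ box d n, znorm k ^ 2 * ‖u t k‖ ^ 2 := by
    rw [energy_eq_sum_box hsupp]
    exact sum_le_sum fun k _ => norm_sq_le_znorm_sq_mul (hu.1 t) k
  have hforce := sum_re_inner_projP_le (box d n) (u t) (f t)
  rw [← energy_eq_sum_box hsupp, ← energy_eq_sum_box (hfsupp t)] at hforce
  simp only [re_inner_galerkinRHS, mul_add, mul_sub, sum_add_distrib, sum_sub_distrib, ← mul_sum,
    hnl]
  linarith [mul_le_mul_of_nonneg_left hvisc hν.le]

/-- Energy inequality: along any real divergence-free solution of a symmetric Galerkin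
projection of the Navier–Stokes Fourier system (`d ≥ 2`),
`d/dt E(u(t)) ≤ -2ν E(u(t)) + 2 √(E(u(t))) √(E(f(t)))`. -/
theorem energy_derivative_inequality (d : ℕ) (hd : 2 ≤ d) (ν : ℝ) (hν : 0 < ν)
    (n : ℝ) (hn : 1 ≤ n)
    (f : ℝ → (Fin d → ℤ) → EuclideanSpace ℂ (Fin d))
    (hf0 : ∀ t, f t 0 = 0) (hfsupp : ∀ t k, n < znorm k → f t k = 0)
    (hfc : ∀ k, Continuous fun t => f t k)
    (u : ℝ → (Fin d → ℤ) → EuclideanSpace ℂ (Fin d))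
    (hu : IsGalerkinSol ν n f u)
    (hreal : ∀ t, realSeq (u t)) (hdiv : ∀ t, divFree (u t)) :
    ∀ t : ℝ, ∃ dE : ℝ, HasDerivAt (fun s => energy (u s)) dE t ∧
      dE ≤ -2 * ν * energy (u t)
            + 2 * Real.sqrt (energy (u t)) * Real.sqrt (energy (f t)) :=
  energy_derivative_inequality_general d ν hν n f hfsupp u hu hreal hdiv
end
end

section
/- Let d = 3, ν > 0, s > 3 and let C₂ = C₂(s) be a constant such that |N_k(u)| ≤ C₂ C² / |k|^{s−1} for every C > 0, every divergence-free u ∈ Z(C,s) and every k ≠ 0. Let 0 < C < ν/C₂, let s_V ≥ s, A_V > 0, and let f_k : ℝ → ℂ³ (k ≠ 0) be a continuous forcing with |f_k(t)| ≤ A_V/|k|^{s_V} for all t and k ≠ 0. Then there exists K₀ such that for every n > K₀ and every m ≥ 1, the set of real divergence-free sequences in Z(C,s) is forward invariant for the symmetric Galerkin projection of order m of the Navier–Stokes Fourier system with forcing (I − P_n)f, i.e. with f_k replaced by 0 for all |k| ≤ n. -/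
/-!
Each Fourier mode `u_k` is a single ODE whose energy obeys
`d/dt |u_k|² = 2 Re⟨u_k, N_k(u) - ν|k|² u_k + Π_k f_k⟩`, the projection dropping out because `u`
is divergence-free. On the boundary `|u_k| = C/|k|^s` of `Z(C,s)` the nonlinearity costs at most
`C₂C²/|k|^{s-1}` and dissipation gains `νC/|k|^{s-2}`, leaving the margin `(ν - C₂C)C|k|/|k|^s`.
The forcing, which only acts on `|k| > n`, is at most `A/|k|^s` there, so it fits into the margin
once `n > A/((ν - C₂C)C)`. Hence `|u_k|` decreases whenever it touches its bound, and since
only the finitely many modes `|k| ≤ m` move, continuity induction in time keeps `u` in `Z(C,s)`.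
-/

noncomputable section

open scoped BigOperators

open scoped RealInnerProductSpace ComplexConjugate
open Filter Set Topology

lemma abs_le_znorm {d : ℕ} (k : Fin d → ℤ) (i : Fin d) : |(k i : ℝ)| ≤ znorm k :=
  Real.abs_le_sqrt <| Finset.single_le_sum (f := fun j => ((k j : ℝ)) ^ 2)
    (fun _ _ => sq_nonneg _) (Finset.mem_univ i)

lemma one_le_znorm {d : ℕ} {k : Fin d → ℤ} (hk : k ≠ 0) : 1 ≤ znorm k := by
  obtain ⟨i, hi⟩ : ∃ i, k i ≠ 0 := Function.ne_iff.mp hk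
  have : (1 : ℝ) ≤ |(k i : ℝ)| := by exact_mod_cast Int.one_le_abs hi
  exact this.trans (abs_le_znorm k i)

lemma finite_setOf_znorm_le (d : ℕ) (m : ℝ) : {k : Fin d → ℤ | znorm k ≤ m}.Finite := by
  refine (Set.finite_Icc (fun _ => -⌈m⌉) (fun _ => ⌈m⌉)).subset fun k hk => ?_
  have hbd i := abs_le.mp ((abs_le_znorm k i).trans hk)
  have hceil := Int.le_ceil m
  refine ⟨fun i => ?_, fun i => ?_⟩
  · exact_mod_cast (show ((-⌈m⌉ : ℤ) : ℝ) ≤ k i by push_cast; linarith [hbd i])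
  · exact_mod_cast (show (k i : ℝ) ≤ ⌈m⌉ by linarith [hbd i])

lemma real_inner_projP_of_dotZ_eq_zero {d : ℕ} (k : Fin d → ℤ) (v w : EuclideanSpace ℂ (Fin d))
    (hw : dotZ w k = 0) : ⟪projP k v, w⟫ = ⟪v, w⟫ := by
  set c : ℂ := dotZ v k / ((∑ i, ((k i : ℝ)) ^ 2 : ℝ) : ℂ)
  have hsum : ∑ j, w j * conj (projP k v j) = ∑ j, w j * conj (v j) - conj c * dotZ w k := by
    rw [dotZ, Finset.mul_sum, ← Finset.sum_sub_distrib]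
    refine Finset.sum_congr rfl fun j _ => ?_
    change w j * conj (v j - c * (k j : ℂ)) = _
    simp only [map_sub, map_mul, map_intCast]
    ring
  simp only [PiLp.inner_apply, Complex.inner, ← Complex.re_sum]
  rw [hsum, hw, mul_zero, sub_zero]

lemma real_inner_self_galerkinRHS {d : ℕ} (ν : ℝ) (fk : EuclideanSpace ℂ (Fin d))
    (u : (Fin d → ℤ) → EuclideanSpace ℂ (Fin d)) (k : Fin d → ℤ) (hk : dotZ (u k) k = 0) :
    ⟪u k, GalerkinRHS ν fk u k⟫ = ⟪u k, Nfun u k⟫ - ν * znorm k ^ 2 * ‖u k‖ ^ 2 + ⟪u k, fk⟫ := by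
  rw [GalerkinRHS, inner_add_right, inner_sub_right, Complex.coe_smul, real_inner_smul_right,
    real_inner_self_eq_norm_sq, real_inner_comm (projP k fk) (u k),
    real_inner_projP_of_dotZ_eq_zero k fk (u k) hk, real_inner_comm fk, Nfun]

lemma real_inner_self_galerkinRHS_neg {d : ℕ} {ν : ℝ} {fk : EuclideanSpace ℂ (Fin d)}
    {u : (Fin d → ℤ) → EuclideanSpace ℂ (Fin d)} {k : Fin d → ℤ} (hk : dotZ (u k) k = 0)
    (hu : u k ≠ 0) (h : ‖Nfun u k‖ + ‖fk‖ < ν * znorm k ^ 2 * ‖u k‖) :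
    ⟪u k, GalerkinRHS ν fk u k⟫ < 0 := by
  rw [real_inner_self_galerkinRHS ν fk u k hk]
  have hN := real_inner_le_norm (u k) (Nfun u k)
  have hf := real_inner_le_norm (u k) fk
  have hmul := mul_lt_mul_of_pos_left h (norm_pos_iff.mpr hu)
  nlinarith

lemma HasDerivAt.eventually_lt_right_of_neg {φ : ℝ → ℝ} {L T : ℝ} (h : HasDerivAt φ L T)
    (hL : L < 0) : ∀ᶠ t in 𝓝[>] T, φ t < φ T := by
  filter_upwards [h.hasDerivWithinAt.limsup_slope_le' (lt_irrefl T) hL, self_mem_nhdsWithin]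
    with t hslope hT
  exact (slope_neg_iff_of_le (le_of_lt hT)).mp hslope

lemma HasDerivAt.eventually_norm_lt_right {E : Type*} [NormedAddCommGroup E]
    [InnerProductSpace ℝ E] {g : ℝ → E} {D : E} {T : ℝ} (h : HasDerivAt g D T)
    (hD : ⟪g T, D⟫ < 0) : ∀ᶠ t in 𝓝[>] T, ‖g t‖ < ‖g T‖ := by
  filter_upwards [h.norm_sq.eventually_lt_right_of_neg (by linarith)] with t ht
  exact lt_of_pow_lt_pow_left₀ 2 (norm_nonneg _) ht

theorem norm_le_of_inner_deriv_neg_at_bound {ι E : Type*} [NormedAddCommGroup E]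
    [InnerProductSpace ℝ E] {s : Set ι} (hs : s.Finite) {x x' : ℝ → ι → E} {R : ι → ℝ}
    (hx : ∀ t, ∀ i ∈ s, HasDerivAt (fun t => x t i) (x' t i) t)
    (hbound : ∀ t, (∀ i ∈ s, ‖x t i‖ ≤ R i) → ∀ i ∈ s, ‖x t i‖ = R i → ⟪x t i, x' t i⟫ < 0)
    {a b : ℝ} (hab : a ≤ b) (ha : ∀ i ∈ s, ‖x a i‖ ≤ R i) : ∀ i ∈ s, ‖x b i‖ ≤ R i := by
  set S := ⋂ i ∈ s, {t | ‖x t i‖ ≤ R i}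
  have hcont : ∀ i ∈ s, Continuous fun t => ‖x t i‖ := fun i hi =>
    (continuous_iff_continuousAt.mpr fun t => (hx t i hi).continuousAt).norm
  have hS : IsClosed S :=
    isClosed_biInter fun i hi => isClosed_le (hcont i hi) continuous_const
  suffices Icc a b ⊆ S by simpa [S] using this ⟨hab, le_rfl⟩
  refine (hS.inter isClosed_Icc).Icc_subset_of_forall_mem_nhdsWithin (by simpa [S] using ha) ?_
  intro T ⟨hT, _⟩
  have hT : ∀ i ∈ s, ‖x T i‖ ≤ R i := by simpa [S] using hT
  refine (biInter_mem hs).mpr fun i hi => ?_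
  rcases (hT i hi).lt_or_eq with hlt | heq
  · exact mem_nhdsWithin_of_mem_nhds
      (((hcont i hi).tendsto T).eventually_lt_const hlt |>.mono fun _ => le_of_lt)
  · filter_upwards [(hx T i hi).eventually_norm_lt_right (hbound T hT i hi heq)] with t ht
    exact heq ▸ ht.le

theorem IsGalerkinSol.norm_le_of_le {d : ℕ} {ν m : ℝ}
    {f u : ℝ → (Fin d → ℤ) → EuclideanSpace ℂ (Fin d)} (hsol : IsGalerkinSol ν m f u)
    (hdiv : ∀ t, divFree (u t)) {R : (Fin d → ℤ) → ℝ} (hR : ∀ k, k ≠ 0 → 0 < R k)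
    (hmargin : ∀ t, (∀ k, k ≠ 0 → ‖u t k‖ ≤ R k) → ∀ k, k ≠ 0 → znorm k ≤ m →
      ‖u t k‖ = R k → ‖Nfun (u t) k‖ + ‖f t k‖ < ν * znorm k ^ 2 * R k)
    {t₀ t : ℝ} (ht : t₀ ≤ t) (h₀ : ∀ k, k ≠ 0 → ‖u t₀ k‖ ≤ R k) :
    ∀ k, k ≠ 0 → ‖u t k‖ ≤ R k := by
  obtain ⟨-, hhigh, hderiv⟩ := hsol
  set s := {k : Fin d → ℤ | k ≠ 0 ∧ znorm k ≤ m}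
  have hextend : ∀ t, (∀ k ∈ s, ‖u t k‖ ≤ R k) → ∀ k, k ≠ 0 → ‖u t k‖ ≤ R k := by
    intro t h k hk
    by_cases hkm : znorm k ≤ m
    · exact h k ⟨hk, hkm⟩
    · rw [hhigh t k (not_le.mp hkm), norm_zero]
      exact (hR k hk).le
  refine hextend t <| norm_le_of_inner_deriv_neg_at_bound
    ((finite_setOf_znorm_le d m).subset fun k hk => hk.2)
    (fun t k hk => hderiv t k hk.1 hk.2) ?_ ht fun k hk => h₀ k hk.1
  intro T hT k ⟨hk, hkm⟩ heq
  refine real_inner_self_galerkinRHS_neg (hdiv T k) ?_ ?_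
  · exact norm_ne_zero_iff.mp (heq ▸ (hR k hk).ne')
  · exact heq ▸ hmargin T (hextend T hT) k hk hkm heq

lemma far_tail_margin {ν C C₂ A s sV n x F : ℝ} (hν : 0 < ν) (hC : 0 < C)
    (hC₂C : C₂ * C < ν) (hA : 0 ≤ A) (hsV : s ≤ sV) (hn : A / ((ν - C₂ * C) * C) < n)
    (hx : 1 ≤ x) (hF : F ≤ if x ≤ n then 0 else A / x ^ sV) :
    C₂ * C ^ 2 / x ^ (s - 1) + F < ν * x ^ 2 * (C / x ^ s) := by
  have hx0 : 0 < x := one_pos.trans_le hx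
  have hxs : 0 < x ^ s := Real.rpow_pos_of_pos hx0 s
  have hε : 0 < (ν - C₂ * C) * C := mul_pos (by linarith) hC
  set G : ℝ := if x ≤ n then 0 else A
  have hG : G < (ν - C₂ * C) * C * x := by
    by_cases hxn : x ≤ n
    · simpa [G, hxn] using mul_pos hε hx0
    · simp only [G, hxn, if_false]
      rw [div_lt_iff₀ hε] at hn
      nlinarith
  have hFG : F ≤ G / x ^ s := by
    refine hF.trans ?_
    by_cases hxn : x ≤ n
    · simp [G, hxn]
    · simp only [G, hxn, if_false]
      exact div_le_div_of_nonneg_left hA hxs (Real.rpow_le_rpow_of_exponent_le hx hsV)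
  have hdiss : ν * C * x ≤ ν * C * x ^ 2 := by
    have := mul_le_mul_of_nonneg_left hx (mul_pos (mul_pos hν hC) hx0).le
    nlinarith
  have hkey : C₂ * C ^ 2 * x + G < ν * C * x ^ 2 := by linarith
  have hs1 : x ^ (s - 1) = x ^ s / x := by rw [Real.rpow_sub hx0, Real.rpow_one]
  calc C₂ * C ^ 2 / x ^ (s - 1) + F ≤ (C₂ * C ^ 2 * x + G) / x ^ s := by
        rw [hs1, div_div_eq_mul_div, add_div]; linarith
    _ < ν * C * x ^ 2 / x ^ s := div_lt_div_of_pos_right hkey hxs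
    _ = ν * x ^ 2 * (C / x ^ s) := by ring

theorem trapping_region_3d_far_tail_general (ν s : ℝ) (hν : 0 < ν)
    (C₂ : ℝ) (hC₂ : 0 < C₂)
    (hC₂N : ∀ C : ℝ, 0 < C →
      ∀ u : (Fin 3 → ℤ) → EuclideanSpace ℂ (Fin 3),
        divFree u → u 0 = 0 →
        (∀ k : Fin 3 → ℤ, k ≠ 0 → ‖u k‖ ≤ C / znorm k ^ s) →
        ∀ k : Fin 3 → ℤ, k ≠ 0 → ‖Nfun u k‖ ≤ C₂ * C^2 / znorm k ^ (s - 1))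
    (C : ℝ) (hC : 0 < C) (hCν : C < ν / C₂)
    (sV A : ℝ) (hsV : s ≤ sV) (hA : 0 < A)
    (f : ℝ → (Fin 3 → ℤ) → EuclideanSpace ℂ (Fin 3))
    (hfb : ∀ t (k : Fin 3 → ℤ), k ≠ 0 → ‖f t k‖ ≤ A / znorm k ^ sV) :
    ∃ K₀ : ℝ, ∀ n : ℝ, K₀ < n → ∀ m : ℝ, 1 ≤ m →
      ∀ u : ℝ → (Fin 3 → ℤ) → EuclideanSpace ℂ (Fin 3),
        IsGalerkinSol ν m (fun t k => if znorm k ≤ n then 0 else f t k) u →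
        (∀ t, realSeq (u t)) → (∀ t, divFree (u t)) →
        ∀ t₀, (∀ k : Fin 3 → ℤ, k ≠ 0 → ‖u t₀ k‖ ≤ C / znorm k ^ s) →
        ∀ t, t₀ ≤ t → ∀ k : Fin 3 → ℤ, k ≠ 0 → ‖u t k‖ ≤ C / znorm k ^ s := by
  have hC₂C : C₂ * C < ν := by linarith [(lt_div_iff₀ hC₂).mp hCν]
  refine ⟨A / ((ν - C₂ * C) * C), fun n hn m _ u hsol _ hdiv t₀ h₀ t ht =>
    hsol.norm_le_of_le hdiv (fun k hk => ?_) (fun T hT k hk _ _ => ?_) ht h₀⟩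
  · have := Real.rpow_pos_of_pos (one_pos.trans_le (one_le_znorm hk)) s
    positivity
  · refine (add_le_add_left (hC₂N C hC (u T) (hdiv T) (hsol.1 T) hT k hk) _).trans_lt
      (far_tail_margin hν hC hC₂C hA.le hsV hn (one_le_znorm hk) ?_)
    split_ifs
    · exact norm_zero.le
    · exact hfb T k hk

/-- 3D trapping region with far-tail forcing: given `C₂ = C₂(s)` bounding the
nonlinearity on `Z(C,s)`, `0 < C < ν/C₂`, and a forcing with `|f_k(t)| ≤ A_V/|k|^{s_V}`
(`s_V ≥ s`), there exists `K₀` such that for every `n > K₀` and every order `m ≥ 1`,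
the set of real divergence-free sequences in `Z(C,s)` is forward invariant for the
symmetric Galerkin projection of order `m` with forcing `(I - P_n) f`. -/
theorem trapping_region_3d_far_tail (ν s : ℝ) (hν : 0 < ν) (hs : 3 < s)
    (C₂ : ℝ) (hC₂ : 0 < C₂)
    (hC₂N : ∀ C : ℝ, 0 < C →
      ∀ u : (Fin 3 → ℤ) → EuclideanSpace ℂ (Fin 3),
        divFree u → u 0 = 0 →
        (∀ k : Fin 3 → ℤ, k ≠ 0 → ‖u k‖ ≤ C / znorm k ^ s) →
        ∀ k : Fin 3 → ℤ, k ≠ 0 → ‖Nfun u k‖ ≤ C₂ * C^2 / znorm k ^ (s - 1))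
    (C : ℝ) (hC : 0 < C) (hCν : C < ν / C₂)
    (sV A : ℝ) (hsV : s ≤ sV) (hA : 0 < A)
    (f : ℝ → (Fin 3 → ℤ) → EuclideanSpace ℂ (Fin 3))
    (hf0 : ∀ t, f t 0 = 0) (hfc : ∀ k, Continuous fun t => f t k)
    (hfb : ∀ t (k : Fin 3 → ℤ), k ≠ 0 → ‖f t k‖ ≤ A / znorm k ^ sV) :
    ∃ K₀ : ℝ, ∀ n : ℝ, K₀ < n → ∀ m : ℝ, 1 ≤ m →
      ∀ u : ℝ → (Fin 3 → ℤ) → EuclideanSpace ℂ (Fin 3),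
        IsGalerkinSol ν m (fun t k => if znorm k ≤ n then 0 else f t k) u →
        (∀ t, realSeq (u t)) → (∀ t, divFree (u t)) →
        ∀ t₀, (∀ k : Fin 3 → ℤ, k ≠ 0 → ‖u t₀ k‖ ≤ C / znorm k ^ s) →
        ∀ t, t₀ ≤ t → ∀ k : Fin 3 → ℤ, k ≠ 0 → ‖u t k‖ ≤ C / znorm k ^ s :=
  trapping_region_3d_far_tail_general ν s hν C₂ hC₂ hC₂N C hC hCν sV A hsV hA f hfb
end
end
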